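/- Permutation equivalent rewrites are coinitial and cofinal modulo βη: if Γ ⊢ ρ : p₀ → p₁ : A and Γ ⊢ σ : q₀ → q₁ : A with ρ ≈ σ, then src(ρ) =βη src(σ) and tgt(ρ) =βη tgt(σ). -/

import Mathlib

namespace HOR

/-- Simple types over a set of base types `B`. -/
inductive Ty (B : Type) : Type
  | base : B → Ty B
  | arrow : Ty B → Ty B → Ty B

/-- Simply-typed λ-terms (de Bruijn representation) over a set of constants `C`. -/
inductive Tm (B C : Type) : Type
  | var : ℕ → Tm B C
  | const : C → Tm B C
  | lam : Tm B C → Tm B C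
  | app : Tm B C → Tm B C → Tm B C

variable {B C R : Type}

namespace Tm

/-- Shift the free variables with index `≥ c` up by `d`. -/
def shift (d : ℕ) : ℕ → Tm B C → Tm B C
  | c, .var n => if n < c then .var n else .var (n + d)
  | _, .const k => .const k
  | c, .lam t => .lam (shift d (c+1) t)
  | c, .app t u => .app (shift d c t) (shift d c u)

/-- Capture-avoiding substitution of the term `u` for the variable `k`. -/
def subst : Tm B C → ℕ → Tm B C → Tm B C
  | .var n, k, u => if n = k then shift k 0 u else if k < n then .var (n-1) else .var n
  | .const c, _, _ => .const c
  | .lam t, k, u => .lam (subst t (k+1) u)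
  | .app t s, k, u => .app (subst t k u) (subst s k u)

/-- Iterated abstraction `λⁿ.t`. -/
def lamN : ℕ → Tm B C → Tm B C
  | 0, t => t
  | n+1, t => .lam (lamN n t)

/-- Iterated application `t u₁ ⋯ uₙ`. -/
def apps : Tm B C → List (Tm B C) → Tm B C
  | t, [] => t
  | t, u :: us => apps (.app t u) us

/-- Parallel (simultaneous) substitution. -/
def psubst : (ℕ → Tm B C) → Tm B C → Tm B C
  | σ, .var n => σ n
  | _, .const c => .const c
  | σ, .lam t => .lam (psubst (fun n => match n with | 0 => .var 0 | m+1 => shift 1 0 (σ m)) t)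
  | σ, .app t u => .app (psubst σ t) (psubst σ u)

/-- Number of free occurrences of variable `k`. -/
def varCount : Tm B C → ℕ → ℕ
  | .var n, k => if n = k then 1 else 0
  | .const _, _ => 0
  | .lam t, k => varCount t (k+1)
  | .app t u, k => varCount t k + varCount u k

/-- Head of a term (spine head). -/
def head : Tm B C → Tm B C
  | .app t _ => head t
  | t => t

end Tm

/-- One-step β- or η-reduction, closed under arbitrary contexts. -/
inductive BetaEtaStep : Tm B C → Tm B C → Prop
  | beta : BetaEtaStep (.app (.lam t) u) (t.subst 0 u)
  | eta : BetaEtaStep (.lam (.app (Tm.shift 1 0 t) (.var 0))) t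
  | lam : BetaEtaStep t t' → BetaEtaStep (.lam t) (.lam t')
  | appL : BetaEtaStep t t' → BetaEtaStep (.app t u) (.app t' u)
  | appR : BetaEtaStep u u' → BetaEtaStep (.app t u) (.app t u')

/-- βη-equivalence of terms (the equivalence closure of one-step βη-reduction). -/
def BetaEtaEq : Tm B C → Tm B C → Prop :=
  Relation.ReflTransGen (fun a b => BetaEtaStep a b ∨ BetaEtaStep b a)

/-- Typing of terms (simply-typed λ-calculus over a signature `sig`). -/
inductive TmTy (sig : C → Ty B) : List (Ty B) → Tm B C → Ty B → Prop
  | var : Γ[n]? = some A → TmTy sig Γ (.var n) A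
  | const : TmTy sig Γ (.const c) (sig c)
  | lam : TmTy sig (A :: Γ) t B' → TmTy sig Γ (.lam t) (.arrow A B')
  | app : TmTy sig Γ t (.arrow A B') → TmTy sig Γ u A → TmTy sig Γ (.app t u) B'

mutual
  /-- η-long β-normal (i.e. βη̄-normal) forms. -/
  inductive LongNF {B C : Type} (sig : C → Ty B) : List (Ty B) → Tm B C → Ty B → Prop
    | lam : LongNF sig (A :: Γ) t B' → LongNF sig Γ (.lam t) (.arrow A B')
    | neutral : NeutralNF sig Γ t (.base b) → LongNF sig Γ t (.base b)
  /-- Neutral spines: a variable or constant applied to η-long β-normal arguments. -/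
  inductive NeutralNF {B C : Type} (sig : C → Ty B) : List (Ty B) → Tm B C → Ty B → Prop
    | var : Γ[n]? = some A → NeutralNF sig Γ (.var n) A
    | const : NeutralNF sig Γ (.const c) (sig c)
    | app : NeutralNF sig Γ t (.arrow A B') → LongNF sig Γ u A → NeutralNF sig Γ (.app t u) B'
end

/-- `A = A₁ → ⋯ → Aₙ → β` for some base type `β`. -/
def Ty.baseAfter : ℕ → Ty B → Prop
  | 0, A => ∃ b, A = Ty.base b
  | n+1, A => ∃ A₁ A₂, A = Ty.arrow A₁ A₂ ∧ Ty.baseAfter n A₂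

/-- `t` is η-equivalent to the locally bound variable `i < b`. -/
def EtaBoundVar (b : ℕ) (t : Tm B C) (i : ℕ) : Prop :=
  i < b ∧ BetaEtaEq t (.var i)

/-- Pattern condition for the body of a left-hand side with `n` metavariables,
under `b` local binders: every occurrence of a metavariable is applied to
terms η-equivalent to pairwise distinct locally bound variables. -/
inductive PatternBody (n : ℕ) : ℕ → Tm B C → Prop
  | lam : PatternBody n (b+1) t → PatternBody n b (.lam t)
  | rigidVar : i < b → (∀ u ∈ args, PatternBody n b u) →
      PatternBody n b (Tm.apps (.var i) args)
  | rigidConst : (∀ u ∈ args, PatternBody n b u) →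
      PatternBody n b (Tm.apps (.const c) args)
  | flex : b ≤ m → m < b + n →
      (∃ is : List ℕ, is.Nodup ∧ List.Forall₂ (EtaBoundVar b) args is) →
      PatternBody n b (Tm.apps (.var m) args)

/-- A Higher-order Rewriting System: a signature together with a set of rules
`⟨ϱ, ℓ, r⟩` (indexed by the rule symbols `R`), stored in closed form
`λx₁…xₙ.ℓ`, `λx₁…xₙ.r`, where `ℓ, r` are βη̄-normal terms of the same base type,
`ℓ` is a pattern that is not η-equivalent to a variable, and `fv(r) ⊆ fv(ℓ)`
(ensured by closedness of both sides over the same variables). -/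
structure HRS (B C R : Type) where
  sig : C → Ty B
  nargs : R → ℕ
  lhsBody : R → Tm B C
  rhsBody : R → Tm B C
  ruleTy : R → Ty B
  rule_base : ∀ r, Ty.baseAfter (nargs r) (ruleTy r)
  lhs_nf : ∀ r, LongNF sig [] (Tm.lamN (nargs r) (lhsBody r)) (ruleTy r)
  rhs_nf : ∀ r, LongNF sig [] (Tm.lamN (nargs r) (rhsBody r)) (ruleTy r)
  lhs_pattern : ∀ r, PatternBody (nargs r) 0 (lhsBody r)
  lhs_not_var : ∀ r i, ¬ BetaEtaEq (lhsBody r) (Tm.var i)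

/-- The closed left-hand side `λx₁…xₙ.ℓ` of a rule. -/
def HRS.lhs (S : HRS B C R) (r : R) : Tm B C := Tm.lamN (S.nargs r) (S.lhsBody r)

/-- The closed right-hand side `λx₁…xₙ.r` of a rule. -/
def HRS.rhs (S : HRS B C R) (r : R) : Tm B C := Tm.lamN (S.nargs r) (S.rhsBody r)

/-- Left-linearity: every variable of the left-hand side occurs exactly once. -/
def LeftLinear (S : HRS B C R) : Prop :=
  ∀ r, ∀ i < S.nargs r, Tm.varCount (S.lhsBody r) i = 1

/-- `u` occurs as a subterm under `k` binders. -/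
inductive SubtermAt : Tm B C → ℕ → Tm B C → Prop
  | refl : SubtermAt t 0 t
  | lam : SubtermAt t k u → SubtermAt (.lam t) (k+1) u
  | appL : SubtermAt t k u → SubtermAt (.app t s) k u
  | appR : SubtermAt s k u → SubtermAt (.app t s) k u

/-- No critical pairs: no non-variable subterm of a left-hand side unifies
(modulo βη, renaming apart) with a left-hand side, except trivially. -/
def NoCriticalPairs (S : HRS B C R) : Prop :=
  ∀ r₁ r₂ (k : ℕ) (u : Tm B C), SubtermAt (S.lhsBody r₁) k u →
    ¬ (∃ m, Tm.head u = Tm.var m ∧ k ≤ m) →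
    (∃ σ₁ σ₂ : ℕ → Tm B C, (∀ i < k, σ₁ i = .var i) ∧ (∀ i < k, σ₂ i = .var i) ∧
        BetaEtaEq (Tm.psubst σ₁ u) (Tm.psubst σ₂ (Tm.shift k 0 (S.lhsBody r₂)))) →
    (k = 0 ∧ u = S.lhsBody r₁ ∧ r₁ = r₂)

/-- An HRS is orthogonal when it is left-linear and has no critical pairs. -/
def Orthogonal (S : HRS B C R) : Prop := LeftLinear S ∧ NoCriticalPairs S

/-- The rewrite relation `→R` of an HRS on βη̄-normal terms:
root steps `θℓ → θr` closed under abstraction and application congruence. -/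
inductive RStep (S : HRS B C R) : List (Ty B) → Ty B → Tm B C → Tm B C → Prop
  | root : LongNF S.sig Γ s A → LongNF S.sig Γ t A →
      args.length = S.nargs r →
      BetaEtaEq (Tm.apps (S.lhs r) args) s → BetaEtaEq (Tm.apps (S.rhs r) args) t →
      RStep S Γ A s t
  | absC : RStep S (A :: Γ) B' s t → RStep S Γ (.arrow A B') (.lam s) (.lam t)
  | appL : RStep S Γ (.arrow A B') s t → TmTy S.sig Γ u A →
      RStep S Γ B' (.app s u) (.app t u)
  | appR : TmTy S.sig Γ s (.arrow A B') → RStep S Γ A u v →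
      RStep S Γ B' (.app s u) (.app s v)

/-- Typed βη-equivalence judgment `Γ ⊢ s ≐ t : A`. -/
inductive TmEq (sig : C → Ty B) : List (Ty B) → Tm B C → Tm B C → Ty B → Prop
  | beta : TmTy sig (A :: Γ) s B' → TmTy sig Γ t A →
      TmEq sig Γ (.app (.lam s) t) (s.subst 0 t) B'
  | eta : TmTy sig Γ s (.arrow A B') →
      TmEq sig Γ (.lam (.app (Tm.shift 1 0 s) (.var 0))) s (.arrow A B')
  | refl : TmTy sig Γ s A → TmEq sig Γ s s A
  | symm : TmEq sig Γ s t A → TmEq sig Γ t s A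
  | trans : TmEq sig Γ s t A → TmEq sig Γ t u A → TmEq sig Γ s u A
  | congAbs : TmEq sig (A :: Γ) s t B' → TmEq sig Γ (.lam s) (.lam t) (.arrow A B')
  | congApp : TmEq sig Γ s s' (.arrow A B') → TmEq sig Γ t t' A →
      TmEq sig Γ (.app s t) (.app s' t') B'

/-- Rewrites: variables, constants, rule symbols, abstraction and application
congruences, and composition `ρ;σ`. -/
inductive Rw (B C R : Type) : Type
  | var : ℕ → Rw B C R
  | const : C → Rw B C R
  | rule : R → Rw B C R
  | lam : Rw B C R → Rw B C R
  | app : Rw B C R → Rw B C R → Rw B C R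
  | comp : Rw B C R → Rw B C R → Rw B C R

namespace Rw

/-- The source term of a rewrite. -/
def src (S : HRS B C R) : Rw B C R → Tm B C
  | .var n => .var n
  | .const c => .const c
  | .rule r => S.lhs r
  | .lam ρ => .lam (src S ρ)
  | .app ρ σ => .app (src S ρ) (src S σ)
  | .comp ρ _ => src S ρ

/-- The target term of a rewrite. -/
def tgt (S : HRS B C R) : Rw B C R → Tm B C
  | .var n => .var n
  | .const c => .const c
  | .rule r => S.rhs r
  | .lam ρ => .lam (tgt S ρ)
  | .app ρ σ => .app (tgt S ρ) (tgt S σ)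
  | .comp _ σ => tgt S σ

/-- Shift the free variables with index `≥ c` up by `d`. -/
def shiftR (d : ℕ) : ℕ → Rw B C R → Rw B C R
  | c, .var n => if n < c then .var n else .var (n + d)
  | _, .const k => .const k
  | _, .rule r => .rule r
  | c, .lam ρ => .lam (shiftR d (c+1) ρ)
  | c, .app ρ σ => .app (shiftR d c ρ) (shiftR d c σ)
  | c, .comp ρ σ => .comp (shiftR d c ρ) (shiftR d c σ)

/-- Capture-avoiding substitution of the rewrite `ν` for the variable `k`.
When `ν` is (the coercion of) a term this is rewrite/term substitution `ρ{x\t}`,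
and when the rewrite being substituted into is (the coercion of) a term this is
term/rewrite substitution `s⟨x\ρ⟩`. -/
def substR : Rw B C R → ℕ → Rw B C R → Rw B C R
  | .var n, k, ν => if n = k then shiftR k 0 ν else if k < n then .var (n-1) else .var n
  | .const c, _, _ => .const c
  | .rule r, _, _ => .rule r
  | .lam ρ, k, ν => .lam (substR ρ (k+1) ν)
  | .app ρ σ, k, ν => .app (substR ρ k ν) (substR σ k ν)
  | .comp ρ σ, k, ν => .comp (substR ρ k ν) (substR σ k ν)

/-- Multisteps: rewrites with no occurrence of composition. -/
def IsMultistep : Rw B C R → Prop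
  | .lam ρ => IsMultistep ρ
  | .app ρ σ => IsMultistep ρ ∧ IsMultistep σ
  | .comp _ _ => False
  | _ => True

/-- Iterated abstraction. -/
def lamN : ℕ → Rw B C R → Rw B C R
  | 0, ρ => ρ
  | n+1, ρ => .lam (lamN n ρ)

/-- Iterated application. -/
def apps : Rw B C R → List (Rw B C R) → Rw B C R
  | ρ, [] => ρ
  | ρ, σ :: σs => apps (.app ρ σ) σs

end Rw

/-- Coercion of a term to the (unit/empty) rewrite it denotes. -/
def Tm.toRw : Tm B C → Rw B C R
  | .var n => .var n
  | .const c => .const c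
  | .lam t => .lam (toRw t)
  | .app t u => .app (toRw t) (toRw u)

/-- Higher-Order Rewriting Logic: `Γ ⊢ ρ : s → t : A`. -/
inductive RwTy (S : HRS B C R) : List (Ty B) → Rw B C R → Tm B C → Tm B C → Ty B → Prop
  | var : Γ[n]? = some A → RwTy S Γ (.var n) (.var n) (.var n) A
  | const : RwTy S Γ (.const c) (.const c) (.const c) (S.sig c)
  | rule : RwTy S Γ (.rule r) (S.lhs r) (S.rhs r) (S.ruleTy r)
  | abs : RwTy S (A :: Γ) ρ s t B' → RwTy S Γ (.lam ρ) (.lam s) (.lam t) (.arrow A B')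
  | app : RwTy S Γ ρ s₀ s₁ (.arrow A B') → RwTy S Γ σ t₀ t₁ A →
      RwTy S Γ (.app ρ σ) (.app s₀ t₀) (.app s₁ t₁) B'
  | comp : RwTy S Γ ρ s₀ s₁ A → RwTy S Γ σ s₁ s₂ A → RwTy S Γ (.comp ρ σ) s₀ s₂ A
  | conv : RwTy S Γ ρ s' t' A → TmEq S.sig Γ s s' A → TmEq S.sig Γ t' t A →
      RwTy S Γ ρ s t A

/-- A rewrite is well-typed (typable) if it has some typing judgment. -/
def WT (S : HRS B C R) (ρ : Rw B C R) : Prop := ∃ Γ s t A, RwTy S Γ ρ s t A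

/-- Permutation equivalence `ρ ≈ σ` of rewrites: the reflexive, symmetric,
transitive, contextual closure of the axioms IdL, IdR, Assoc, Abs, App,
BetaTR, BetaRT and Eta, each applying only between well-typed rewrites. -/
inductive PermEq (S : HRS B C R) : Rw B C R → Rw B C R → Prop
  | idL : WT S (.comp (Tm.toRw (Rw.src S ρ)) ρ) → WT S ρ →
      PermEq S (.comp (Tm.toRw (Rw.src S ρ)) ρ) ρ
  | idR : WT S (.comp ρ (Tm.toRw (Rw.tgt S ρ))) → WT S ρ →
      PermEq S (.comp ρ (Tm.toRw (Rw.tgt S ρ))) ρ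
  | assoc : WT S (.comp (.comp ρ σ) τ) → WT S (.comp ρ (.comp σ τ)) →
      PermEq S (.comp (.comp ρ σ) τ) (.comp ρ (.comp σ τ))
  | abs : WT S (.comp (.lam ρ) (.lam σ)) → WT S (.lam (.comp ρ σ)) →
      PermEq S (.comp (.lam ρ) (.lam σ)) (.lam (.comp ρ σ))
  | app : WT S (.comp (.app ρ₁ ρ₂) (.app σ₁ σ₂)) → WT S (.app (.comp ρ₁ σ₁) (.comp ρ₂ σ₂)) →
      PermEq S (.comp (.app ρ₁ ρ₂) (.app σ₁ σ₂)) (.app (.comp ρ₁ σ₁) (.comp ρ₂ σ₂))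
  | betaTR : WT S (.app (.lam (Tm.toRw s)) ρ) → WT S (Rw.substR (Tm.toRw s) 0 ρ) →
      PermEq S (.app (.lam (Tm.toRw s)) ρ) (Rw.substR (Tm.toRw s) 0 ρ)
  | betaRT : WT S (.app (.lam ρ) (Tm.toRw s)) → WT S (Rw.substR ρ 0 (Tm.toRw s)) →
      PermEq S (.app (.lam ρ) (Tm.toRw s)) (Rw.substR ρ 0 (Tm.toRw s))
  | eta : WT S (.lam (.app (Rw.shiftR 1 0 ρ) (.var 0))) → WT S ρ →
      PermEq S (.lam (.app (Rw.shiftR 1 0 ρ) (.var 0))) ρ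
  | refl : WT S ρ → PermEq S ρ ρ
  | symm : PermEq S ρ σ → PermEq S σ ρ
  | trans : PermEq S ρ σ → PermEq S σ τ → PermEq S ρ τ
  | congLam : PermEq S ρ ρ' → PermEq S (.lam ρ) (.lam ρ')
  | congAppL : PermEq S ρ ρ' → WT S σ → PermEq S (.app ρ σ) (.app ρ' σ)
  | congAppR : WT S ρ → PermEq S σ σ' → PermEq S (.app ρ σ) (.app ρ σ')
  | congCompL : PermEq S ρ ρ' → WT S σ → PermEq S (.comp ρ σ) (.comp ρ' σ)
  | congCompR : WT S ρ → PermEq S σ σ' → PermEq S (.comp ρ σ) (.comp ρ σ')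

/-- Rewrite/rewrite substitution `ρ⟦x\σ⟧ := ρ{x\src(σ)} ; tgt(ρ)⟨x\σ⟩`. -/
def substRR (S : HRS B C R) (ρ : Rw B C R) (k : ℕ) (σ : Rw B C R) : Rw B C R :=
  .comp (Rw.substR ρ k (Tm.toRw (Rw.src S σ))) (Rw.substR (Tm.toRw (Rw.tgt S ρ)) k σ)

/-- The rules of the flattening system `F`, closed under arbitrary contexts. -/
inductive FStepRaw (S : HRS B C R) : Rw B C R → Rw B C R → Prop
  | abs : FStepRaw S (.lam (.comp ρ σ)) (.comp (.lam ρ) (.lam σ))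
  | app1 : Rw.IsMultistep μ →
      FStepRaw S (.app (.comp ρ σ) μ) (.comp (.app ρ (Tm.toRw (Rw.src S μ))) (.app σ μ))
  | app2 : Rw.IsMultistep μ →
      FStepRaw S (.app μ (.comp ρ σ)) (.comp (.app μ ρ) (.app (Tm.toRw (Rw.tgt S μ)) σ))
  | app3 : FStepRaw S (.app (.comp ρ₁ ρ₂) (.comp σ₁ σ₂))
      (.comp (.app (.comp ρ₁ ρ₂) (Tm.toRw (Rw.src S σ₁)))
             (.app (Tm.toRw (Rw.tgt S ρ₂)) (.comp σ₁ σ₂)))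
  | betaM : Rw.IsMultistep μ → Rw.IsMultistep ν →
      FStepRaw S (.app (.lam μ) ν) (Rw.substR μ 0 ν)
  | etaM : Rw.IsMultistep μ →
      FStepRaw S (.lam (.app (Rw.shiftR 1 0 μ) (.var 0))) μ
  | congLam : FStepRaw S ρ ρ' → FStepRaw S (.lam ρ) (.lam ρ')
  | congAppL : FStepRaw S ρ ρ' → FStepRaw S (.app ρ σ) (.app ρ' σ)
  | congAppR : FStepRaw S σ σ' → FStepRaw S (.app ρ σ) (.app ρ σ')
  | congCompL : FStepRaw S ρ ρ' → FStepRaw S (.comp ρ σ) (.comp ρ' σ)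
  | congCompR : FStepRaw S σ σ' → FStepRaw S (.comp ρ σ) (.comp ρ σ')

/-- A flattening step `ρ ↦ σ` (the system `F` is defined between typable rewrites). -/
def FStep (S : HRS B C R) (ρ σ : Rw B C R) : Prop := FStepRaw S ρ σ ∧ WT S ρ

/-- `↦`-normal forms. -/
def FNormal (S : HRS B C R) (ρ : Rw B C R) : Prop := ∀ σ, ¬ FStep S ρ σ

/-- `ρ ↦* σ`. -/
def FStar (S : HRS B C R) : Rw B C R → Rw B C R → Prop := Relation.ReflTransGen (FStep S)

open Classical in
/-- `ρ♭`: the `↦`-normal form of `ρ` (when it exists; it is unique for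
typable rewrites by strong normalization and confluence of `F`). -/
noncomputable def flatten (S : HRS B C R) (ρ : Rw B C R) : Rw B C R :=
  if h : ∃ σ, FStar S ρ σ ∧ FNormal S σ then h.choose else ρ

/-- Splitting `μ ⋗ μ₁;μ₂` of a multistep. -/
inductive Split (S : HRS B C R) : Rw B C R → Rw B C R → Rw B C R → Prop
  | var : Split S (.var n) (.var n) (.var n)
  | const : Split S (.const c) (.const c) (.const c)
  | ruleL : Split S (.rule r) (.rule r) (Tm.toRw (S.rhs r))
  | ruleR : Split S (.rule r) (Tm.toRw (S.lhs r)) (.rule r)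
  | abs : Split S μ μ₁ μ₂ → Split S (.lam μ) (.lam μ₁) (.lam μ₂)
  | app : Split S μ μ₁ μ₂ → Split S ν ν₁ ν₂ →
      Split S (.app μ ν) (.app μ₁ ν₁) (.app μ₂ ν₂)

/-- Flat permutation equivalence `ρ ∼ σ` between `↦`-normal rewrites:
generated by associativity and the Perm axiom, closed under reflexivity,
symmetry, transitivity and composition contexts. -/
inductive FlatEq (S : HRS B C R) : Rw B C R → Rw B C R → Prop
  | assoc : FlatEq S (.comp (.comp ρ σ) τ) (.comp ρ (.comp σ τ))
  | perm : Rw.IsMultistep μ → FNormal S μ → Split S μ μ₁ μ₂ →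
      FlatEq S μ (.comp (flatten S μ₁) (flatten S μ₂))
  | refl : FlatEq S ρ ρ
  | symm : FlatEq S ρ σ → FlatEq S σ ρ
  | trans : FlatEq S ρ σ → FlatEq S σ τ → FlatEq S ρ τ
  | congCompL : FlatEq S ρ ρ' → FlatEq S (.comp ρ σ) (.comp ρ' σ)
  | congCompR : FlatEq S σ σ' → FlatEq S (.comp ρ σ) (.comp ρ σ')

/-- Weak projection `μ/ν ⇝ ξ` of coinitial multisteps. -/
inductive WProj (S : HRS B C R) : Rw B C R → Rw B C R → Rw B C R → Prop
  | var : WProj S (.var n) (.var n) (.var n)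
  | const : WProj S (.const c) (.const c) (.const c)
  | rule : WProj S (.rule r) (.rule r) (Tm.toRw (S.rhs r))
  | ruleL : WProj S (.rule r) (Tm.toRw (S.lhs r)) (.rule r)
  | ruleR : WProj S (Tm.toRw (S.lhs r)) (.rule r) (Tm.toRw (S.rhs r))
  | abs : WProj S μ ν ξ → WProj S (.lam μ) (.lam ν) (.lam ξ)
  | app : WProj S μ₁ ν₁ ξ₁ → WProj S μ₂ ν₂ ξ₂ →
      WProj S (.app μ₁ μ₂) (.app ν₁ ν₂) (.app ξ₁ ξ₂)

/-- Compatibility of coinitial multisteps: both are η-expanded β-normal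
forms, except that heads may be sources of rules. -/
inductive Compat (S : HRS B C R) : Rw B C R → Rw B C R → Prop
  | cvar : ms.length = ns.length →
      (∀ (i : ℕ) (m n' : Rw B C R), ms[i]? = some m → ns[i]? = some n' → Compat S m n') →
      Compat S (Rw.lamN k (Rw.apps (.var v) ms)) (Rw.lamN k (Rw.apps (.var v) ns))
  | ccon : ms.length = ns.length →
      (∀ (i : ℕ) (m n' : Rw B C R), ms[i]? = some m → ns[i]? = some n' → Compat S m n') →
      Compat S (Rw.lamN k (Rw.apps (.const c) ms)) (Rw.lamN k (Rw.apps (.const c) ns))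
  | crule : ms.length = ns.length →
      (∀ (i : ℕ) (m n' : Rw B C R), ms[i]? = some m → ns[i]? = some n' → Compat S m n') →
      Compat S (Rw.lamN k (Rw.apps (.rule r) ms)) (Rw.lamN k (Rw.apps (.rule r) ns))
  | cruleL : ms.length = ns.length →
      (∀ (i : ℕ) (m n' : Rw B C R), ms[i]? = some m → ns[i]? = some n' → Compat S m n') →
      Compat S (Rw.lamN k (Rw.apps (.rule r) ms)) (Rw.lamN k (Rw.apps (Tm.toRw (S.lhs r)) ns))
  | cruleR : ms.length = ns.length →
      (∀ (i : ℕ) (m n' : Rw B C R), ms[i]? = some m → ns[i]? = some n' → Compat S m n') →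
      Compat S (Rw.lamN k (Rw.apps (Tm.toRw (S.lhs r)) ms)) (Rw.lamN k (Rw.apps (.rule r) ns))

open Classical in
/-- The projection operator `μ/ν` for coinitial multisteps. -/
noncomputable def mproj (S : HRS B C R) (μ ν : Rw B C R) : Rw B C R :=
  if h : ∃ p : Rw B C R × Rw B C R × Rw B C R,
      flatten S p.1 = flatten S μ ∧ flatten S p.2.1 = flatten S ν ∧ WProj S p.1 p.2.1 p.2.2
  then flatten S h.choose.2.2 else μ

/-- Projection of a flat multistep over a coinitial flat rewrite. -/
noncomputable def proj1 (S : HRS B C R) : Rw B C R → Rw B C R → Rw B C R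
  | μ, .comp ρ₁ ρ₂ => proj1 S (proj1 S μ ρ₁) ρ₂
  | μ, ν => mproj S μ ν

/-- Projection of a flat rewrite over a coinitial flat multistep. -/
noncomputable def proj2 (S : HRS B C R) : Rw B C R → Rw B C R → Rw B C R
  | .comp ρ₁ ρ₂, μ => .comp (proj2 S ρ₁ μ) (proj2 S ρ₂ (proj1 S μ ρ₁))
  | ν, μ => mproj S ν μ

/-- Projection `ρ/σ` of a flat rewrite over a coinitial flat rewrite. -/
noncomputable def proj3 (S : HRS B C R) : Rw B C R → Rw B C R → Rw B C R
  | ρ, .comp σ₁ σ₂ => proj3 S (proj3 S ρ σ₁) σ₂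
  | ρ, μ => proj2 S ρ μ

/-- Projection `ρ ⫽ σ := ρ♭ / σ♭` for arbitrary coinitial rewrites. -/
noncomputable def aproj (S : HRS B C R) (ρ σ : Rw B C R) : Rw B C R :=
  proj3 S (flatten S ρ) (flatten S σ)

/-- Flat rewrites: compositions of `↦`-normal (flat) multisteps. -/
inductive IsFlat (S : HRS B C R) : Rw B C R → Prop
  | ms : Rw.IsMultistep μ → FNormal S μ → IsFlat S μ
  | comp : IsFlat S ρ → IsFlat S σ → IsFlat S (.comp ρ σ)

/-- The rewrite denoted by a sequential rewrite `μ₁;…;μₙ;s̄`. -/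
def seqToRw (p : List (Rw B C R) × Tm B C) : Rw B C R :=
  p.1.foldr Rw.comp (Tm.toRw p.2)

/-- Well-formedness of a sequential rewrite: all components are flat multisteps. -/
def SeqOK (S : HRS B C R) (p : List (Rw B C R) × Tm B C) : Prop :=
  (∀ μ ∈ p.1, Rw.IsMultistep μ ∧ FNormal S μ) ∧ FNormal S (Tm.toRw p.2)

/-- Empty multisteps: those containing no rule symbols, i.e. coerced terms. -/
def EmptyMs (μ : Rw B C R) : Prop := ∃ t : Tm B C, μ = Tm.toRw t

/-- The standardization relation `▷` on sequential rewrites. -/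
inductive Std (S : HRS B C R) : List (Rw B C R) × Tm B C → List (Rw B C R) × Tm B C → Prop
  | del : Std S (Tm.toRw t :: l, s) (l, s)
  | pull : FlatEq S μ₁₂ (.comp μ₁ μ₂) → FlatEq S μ₂₃ (.comp μ₂ μ₃) → ¬ EmptyMs μ₂ →
      Std S (μ₁ :: μ₂₃ :: l, s) (μ₁₂ :: μ₃ :: l, s)
  | cong : Std S (l, s) (l', s) → Std S (μ :: l, s) (μ :: l', s)

/-- Strong equivalence `ρ ≍ σ` of sequential rewrites: same length, same final
term, componentwise flat-permutation-equivalent multisteps. -/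
def StrongEq (S : HRS B C R) (p q : List (Rw B C R) × Tm B C) : Prop :=
  p.2 = q.2 ∧ List.Forall₂ (FlatEq S) p.1 q.1

/-- An unfolding of a multistep `μ`: a sequential rewrite of non-empty
multisteps flat-permutation-equivalent to `μ`. -/
def Unfolding (S : HRS B C R) (μ : Rw B C R) (p : List (Rw B C R) × Tm B C) : Prop :=
  SeqOK S p ∧ (∀ ν ∈ p.1, ¬ EmptyMs ν) ∧ FlatEq S μ (seqToRw p)

/-- The finiteness condition: the lengths of unfoldings of any multistep are bounded. -/
def FinCond (S : HRS B C R) : Prop :=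
  ∀ μ : Rw B C R, Rw.IsMultistep μ → WT S μ → ∃ N, ∀ p, Unfolding S μ p → p.1.length ≤ N


/-!
Each generating axiom of `≈` relates rewrites whose sources, and whose targets, are either
syntactically equal or one β- or η-step apart: `src` and `tgt` commute with shifting and
substitution, because the two sides of a rule are closed terms. Since βη-equality is a
congruence and an equivalence, the closure rules of `≈` preserve this property.
-/

/-- All free variables of `t` have index `< c`. -/
def Tm.ClosedUpTo : ℕ → Tm B C → Prop
  | c, .var n => n < c
  | _, .const _ => True
  | c, .lam t => ClosedUpTo (c + 1) t
  | c, .app t u => ClosedUpTo c t ∧ ClosedUpTo c u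

namespace Tm

theorem shift_eq_self_of_closedUpTo {d c k : ℕ} {t : Tm B C} (ht : t.ClosedUpTo c)
    (hk : c ≤ k) : t.shift d k = t := by
  induction t generalizing c k with
  | var n => simp only [shift, if_pos (lt_of_lt_of_le ht hk)]
  | const => rfl
  | lam t ih => simp only [shift, ih (c := c + 1) ht (Nat.succ_le_succ hk)]
  | app t u iht ihu => simp only [shift, iht ht.1 hk, ihu ht.2 hk]

theorem subst_eq_self_of_closedUpTo {c k : ℕ} {t : Tm B C} (u : Tm B C)
    (ht : t.ClosedUpTo c) (hk : c ≤ k) : t.subst k u = t := by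
  induction t generalizing c k with
  | var n =>
      have hnk : n < k := lt_of_lt_of_le ht hk
      simp only [subst, if_neg hnk.ne, if_neg hnk.not_gt]
  | const => rfl
  | lam t ih => simp only [subst, ih (c := c + 1) ht (Nat.succ_le_succ hk)]
  | app t s iht ihs => simp only [subst, iht ht.1 hk, ihs ht.2 hk]

end Tm

mutual

theorem LongNF.closedUpTo {sig : C → Ty B} {Γ : List (Ty B)} {t : Tm B C} {A : Ty B} :
    LongNF sig Γ t A → t.ClosedUpTo Γ.length
  | .lam h => h.closedUpTo
  | .neutral h => h.closedUpTo

theorem NeutralNF.closedUpTo {sig : C → Ty B} {Γ : List (Ty B)} {t : Tm B C} {A : Ty B} :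
    NeutralNF sig Γ t A → t.ClosedUpTo Γ.length
  | .var hn => (List.getElem?_eq_some_iff.mp hn).1
  | .const => trivial
  | .app h₁ h₂ => ⟨h₁.closedUpTo, h₂.closedUpTo⟩

end

theorem HRS.lhs_closedUpTo (S : HRS B C R) (r : R) : (S.lhs r).ClosedUpTo 0 :=
  (S.lhs_nf r).closedUpTo

theorem HRS.rhs_closedUpTo (S : HRS B C R) (r : R) : (S.rhs r).ClosedUpTo 0 :=
  (S.rhs_nf r).closedUpTo

namespace Rw

variable (S : HRS B C R)

@[simp]
theorem src_toRw (t : Tm B C) : src S (t.toRw : Rw B C R) = t := by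
  induction t with
  | var | const => rfl
  | lam t ih => simp only [Tm.toRw, src, ih]
  | app t u iht ihu => simp only [Tm.toRw, src, iht, ihu]

@[simp]
theorem tgt_toRw (t : Tm B C) : tgt S (t.toRw : Rw B C R) = t := by
  induction t with
  | var | const => rfl
  | lam t ih => simp only [Tm.toRw, tgt, ih]
  | app t u iht ihu => simp only [Tm.toRw, tgt, iht, ihu]

theorem src_shiftR (d c : ℕ) (ρ : Rw B C R) :
    src S (ρ.shiftR d c) = (src S ρ).shift d c := by
  induction ρ generalizing c with
  | var n => simp only [shiftR, src, Tm.shift]; split_ifs <;> rfl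
  | const => rfl
  | rule r => exact (Tm.shift_eq_self_of_closedUpTo (S.lhs_closedUpTo r) c.zero_le).symm
  | lam ρ ih => simp only [shiftR, src, Tm.shift, ih]
  | app ρ σ ihρ ihσ => simp only [shiftR, src, Tm.shift, ihρ, ihσ]
  | comp ρ σ ihρ => simp only [shiftR, src, ihρ]

theorem tgt_shiftR (d c : ℕ) (ρ : Rw B C R) :
    tgt S (ρ.shiftR d c) = (tgt S ρ).shift d c := by
  induction ρ generalizing c with
  | var n => simp only [shiftR, tgt, Tm.shift]; split_ifs <;> rfl
  | const => rfl
  | rule r => exact (Tm.shift_eq_self_of_closedUpTo (S.rhs_closedUpTo r) c.zero_le).symm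
  | lam ρ ih => simp only [shiftR, tgt, Tm.shift, ih]
  | app ρ σ ihρ ihσ => simp only [shiftR, tgt, Tm.shift, ihρ, ihσ]
  | comp ρ σ _ ihσ => simp only [shiftR, tgt, ihσ]

theorem src_substR (ρ : Rw B C R) (k : ℕ) (ν : Rw B C R) :
    src S (ρ.substR k ν) = (src S ρ).subst k (src S ν) := by
  induction ρ generalizing k with
  | var n => simp only [substR, src, Tm.subst]; split_ifs <;> simp only [src, src_shiftR]
  | const => rfl
  | rule r => exact (Tm.subst_eq_self_of_closedUpTo _ (S.lhs_closedUpTo r) k.zero_le).symm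
  | lam ρ ih => simp only [substR, src, Tm.subst, ih]
  | app ρ σ ihρ ihσ => simp only [substR, src, Tm.subst, ihρ, ihσ]
  | comp ρ σ ihρ => simp only [substR, src, ihρ]

theorem tgt_substR (ρ : Rw B C R) (k : ℕ) (ν : Rw B C R) :
    tgt S (ρ.substR k ν) = (tgt S ρ).subst k (tgt S ν) := by
  induction ρ generalizing k with
  | var n => simp only [substR, tgt, Tm.subst]; split_ifs <;> simp only [tgt, tgt_shiftR]
  | const => rfl
  | rule r => exact (Tm.subst_eq_self_of_closedUpTo _ (S.rhs_closedUpTo r) k.zero_le).symm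
  | lam ρ ih => simp only [substR, tgt, Tm.subst, ih]
  | app ρ σ ihρ ihσ => simp only [substR, tgt, Tm.subst, ihρ, ihσ]
  | comp ρ σ _ ihσ => simp only [substR, tgt, ihσ]

end Rw

namespace BetaEtaEq

@[refl]
theorem refl (t : Tm B C) : BetaEtaEq t t := Relation.ReflTransGen.refl

theorem of_step {t u : Tm B C} (h : BetaEtaStep t u) : BetaEtaEq t u :=
  Relation.ReflTransGen.single (Or.inl h)

theorem symm {t u : Tm B C} (h : BetaEtaEq t u) : BetaEtaEq u t := by
  induction h with
  | refl => rfl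
  | tail _ hstep ih => exact Relation.ReflTransGen.head hstep.symm ih

theorem trans {t u v : Tm B C} (h₁ : BetaEtaEq t u) (h₂ : BetaEtaEq u v) :
    BetaEtaEq t v :=
  Relation.ReflTransGen.trans h₁ h₂

theorem lam {t u : Tm B C} (h : BetaEtaEq t u) : BetaEtaEq (.lam t) (.lam u) :=
  Relation.ReflTransGen.lift Tm.lam (fun _ _ => Or.imp BetaEtaStep.lam BetaEtaStep.lam) _ _ h

theorem app_left {t u : Tm B C} (s : Tm B C) (h : BetaEtaEq t u) :
    BetaEtaEq (.app t s) (.app u s) :=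
  Relation.ReflTransGen.lift (Tm.app · s)
    (fun _ _ => Or.imp BetaEtaStep.appL BetaEtaStep.appL) _ _ h

theorem app_right (s : Tm B C) {t u : Tm B C} (h : BetaEtaEq t u) :
    BetaEtaEq (.app s t) (.app s u) :=
  Relation.ReflTransGen.lift (Tm.app s)
    (fun _ _ => Or.imp BetaEtaStep.appR BetaEtaStep.appR) _ _ h

end BetaEtaEq

namespace Rw

variable (S : HRS B C R)

theorem src_app_lam_betaEtaEq (ρ ν : Rw B C R) :
    BetaEtaEq (src S (.app (.lam ρ) ν)) (src S (ρ.substR 0 ν)) := by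
  rw [src_substR]
  exact .of_step .beta

theorem tgt_app_lam_betaEtaEq (ρ ν : Rw B C R) :
    BetaEtaEq (tgt S (.app (.lam ρ) ν)) (tgt S (ρ.substR 0 ν)) := by
  rw [tgt_substR]
  exact .of_step .beta

theorem src_etaExpand_betaEtaEq (ρ : Rw B C R) :
    BetaEtaEq (src S (.lam (.app (ρ.shiftR 1 0) (.var 0)))) (src S ρ) := by
  simp only [src, src_shiftR]
  exact .of_step .eta

theorem tgt_etaExpand_betaEtaEq (ρ : Rw B C R) :
    BetaEtaEq (tgt S (.lam (.app (ρ.shiftR 1 0) (.var 0)))) (tgt S ρ) := by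
  simp only [tgt, tgt_shiftR]
  exact .of_step .eta

end Rw

theorem PermEq.betaEtaEq_src_and_tgt {S : HRS B C R} {ρ σ : Rw B C R} (h : PermEq S ρ σ) :
    BetaEtaEq (Rw.src S ρ) (Rw.src S σ) ∧ BetaEtaEq (Rw.tgt S ρ) (Rw.tgt S σ) := by
  induction h with
  | idL => exact ⟨by simp only [Rw.src, Rw.src_toRw]; rfl, by rfl⟩
  | idR => exact ⟨by rfl, by simp only [Rw.tgt, Rw.tgt_toRw]; rfl⟩
  | assoc | abs | app | refl => exact ⟨by rfl, by rfl⟩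
  | betaTR | betaRT =>
      exact ⟨Rw.src_app_lam_betaEtaEq S _ _, Rw.tgt_app_lam_betaEtaEq S _ _⟩
  | eta => exact ⟨Rw.src_etaExpand_betaEtaEq S _, Rw.tgt_etaExpand_betaEtaEq S _⟩
  | symm _ ih => exact ⟨ih.1.symm, ih.2.symm⟩
  | trans _ _ ih₁ ih₂ => exact ⟨ih₁.1.trans ih₂.1, ih₁.2.trans ih₂.2⟩
  | congLam _ ih => exact ⟨ih.1.lam, ih.2.lam⟩
  | congAppL _ _ ih => exact ⟨ih.1.app_left _, ih.2.app_left _⟩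
  | congAppR _ _ ih => exact ⟨ih.1.app_right _, ih.2.app_right _⟩
  | congCompL _ _ ih => exact ⟨ih.1, by rfl⟩
  | congCompR _ _ ih => exact ⟨by rfl, ih.2⟩

end HOR

open HOR in
/-- permutation equivalent rewrites are coinitial and cofinal
modulo βη. -/
theorem statement15 {B C R : Type} (S : HRS B C R) (hOrth : Orthogonal S)
    {Γ : List (Ty B)} {ρ σ : Rw B C R} {p₀ p₁ q₀ q₁ : Tm B C} {A : Ty B}
    (hρ : RwTy S Γ ρ p₀ p₁ A) (hσ : RwTy S Γ σ q₀ q₁ A) (h : PermEq S ρ σ) :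
    BetaEtaEq (Rw.src S ρ) (Rw.src S σ) ∧ BetaEtaEq (Rw.tgt S ρ) (Rw.tgt S σ) :=
  h.betaEtaEq_src_and_tgt
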